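/- For the quadratic functional with integral constraint: among all continuous c : [0, τ] → ℝ^M satisfying ∫₀^τ c(θ) dθ = ψ, the functional J(c) = ∫₀^τ ‖Γ(θ)c(θ) − m̂‖² dθ + μ ∫₀^τ ‖c(θ)‖² dθ is minimized by c*(θ) = Π(θ)⁻¹ (Γ(θ)ᵀ m̂ − λ), where Π(θ) = Γ(θ)ᵀΓ(θ) + μI and λ = (∫₀^τ Π(θ)⁻¹ dθ)⁻¹ (∫₀^τ Π(θ)⁻¹ Γ(θ)ᵀ dθ · m̂ − ψ), provided ∫₀^τ Π(θ)⁻¹ dθ is invertible. -/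

import Mathlib

open Set Matrix intervalIntegral

/-- Squared Euclidean norm of a finite real vector. -/
def sqNorm {k : ℕ} (v : Fin k → ℝ) : ℝ := ∑ i, (v i)^2

/-- The functional J₂ of the paper. -/
noncomputable def J2 {N M : ℕ} (τ μ : ℝ) (Γ : ℝ → Matrix (Fin N) (Fin M) ℝ)
    (mhat : Fin N → ℝ) (c : ℝ → Fin M → ℝ) : ℝ :=
  (∫ θ in (0:ℝ)..τ, sqNorm ((Γ θ).mulVec (c θ) - mhat))
    + μ * ∫ θ in (0:ℝ)..τ, sqNorm (c θ)

/-!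
Each `Π(θ)` is positive definite, so `c*` is well defined and continuous, and integrating
`c* = Π⁻¹Γᵀm̂ - Π⁻¹λ` gives `∫ c* = B m̂ - A λ = ψ` by the choice of `λ`. Moreover `c*(θ)` solves
the normal equations `Π(θ) c*(θ) = Γ(θ)ᵀ m̂ - λ`, so the convex integrand of `J₂` lies above its
tangent plane at `c*(θ)`, of slope `-2λ`. Integrating, `J₂ c ≥ J₂ c* - 2 λ ⬝ (∫ c - ∫ c*) = J₂ c*`
for every feasible `c`.
-/

open MeasureTheory

lemma sqNorm_eq_dotProduct {k : ℕ} (v : Fin k → ℝ) : sqNorm v = v ⬝ᵥ v := by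
  simp [sqNorm, dotProduct, sq]

lemma sqNorm_nonneg {k : ℕ} (v : Fin k → ℝ) : 0 ≤ sqNorm v :=
  Finset.sum_nonneg fun _ _ => sq_nonneg _

@[fun_prop]
lemma continuous_sqNorm {k : ℕ} : Continuous (sqNorm (k := k)) := by
  unfold sqNorm; fun_prop

lemma sqNorm_add {k : ℕ} (x y : Fin k → ℝ) :
    sqNorm (x + y) = sqNorm x + 2 * (x ⬝ᵥ y) + sqNorm y := by
  simp only [sqNorm_eq_dotProduct, dotProduct_add, add_dotProduct, dotProduct_comm y x]
  ring

lemma Matrix.posDef_transpose_mul_self_add_smul_one {m n : Type*} [Fintype m] [Fintype n]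
    [DecidableEq n] (G : Matrix m n ℝ) {μ : ℝ} (hμ : 0 < μ) : (Gᵀ * G + μ • 1).PosDef := by
  simpa using PosDef.posSemidef_add (posSemidef_conjTranspose_mul_self G) (PosDef.one.smul hμ)

theorem ContinuousOn.matrix_inv {X 𝕜 n : Type*} [TopologicalSpace X] [Fintype n] [DecidableEq n]
    [Field 𝕜] [TopologicalSpace 𝕜] [IsTopologicalDivisionRing 𝕜]
    {A : X → Matrix n n 𝕜} {s : Set X} (hA : ContinuousOn A s) (hdet : ∀ x ∈ s, (A x).det ≠ 0) :
    ContinuousOn (fun x => (A x)⁻¹) s := fun x hx =>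
  have hinv : ContinuousAt Ring.inverse (A x).det :=
    Ring.inverse_eq_inv' (G₀ := 𝕜) ▸ continuousAt_inv₀ (hdet x hx)
  (continuousAt_matrix_inv _ hinv).comp_continuousWithinAt (hA x hx)

theorem sqNorm_mulVec_sub_add_ge_of_normal_eq {N M : ℕ} (G : Matrix (Fin N) (Fin M) ℝ) {μ : ℝ}
    (hμ : 0 ≤ μ) (mhat : Fin N → ℝ) {lam y : Fin M → ℝ}
    (hy : (Gᵀ * G + μ • 1) *ᵥ y = Gᵀ *ᵥ mhat - lam) (x : Fin M → ℝ) :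
    sqNorm (G *ᵥ y - mhat) + μ * sqNorm y - 2 * (lam ⬝ᵥ (x - y))
      ≤ sqNorm (G *ᵥ x - mhat) + μ * sqNorm x := by
  set h := x - y
  have hx : x = y + h := by simp [h]
  have cross : (G *ᵥ y - mhat) ⬝ᵥ G *ᵥ h + μ * (y ⬝ᵥ h) = -(lam ⬝ᵥ h) := by
    have grad : Gᵀ *ᵥ (G *ᵥ y - mhat) + μ • y = -lam := by
      rw [add_mulVec, smul_mulVec, one_mulVec, ← mulVec_mulVec] at hy
      rw [mulVec_sub, sub_add_eq_add_sub, hy]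
      abel
    rw [dotProduct_mulVec, ← mulVec_transpose, ← smul_eq_mul, ← smul_dotProduct,
      ← add_dotProduct, grad, neg_dotProduct]
  rw [hx, mulVec_add, add_sub_right_comm (G *ᵥ y), sqNorm_add, sqNorm_add]
  linear_combination sqNorm_nonneg (G *ᵥ h) + mul_nonneg hμ (sqNorm_nonneg h) - 2 * cross

section IntervalIntegral

variable {ι : Type*} [Fintype ι] {μ : Measure ℝ} {a b : ℝ}

theorem intervalIntegrable_pi_iff {f : ℝ → ι → ℝ} :
    IntervalIntegrable f μ a b ↔ ∀ i, IntervalIntegrable (fun θ => f θ i) μ a b := by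
  simp only [intervalIntegrable_iff, IntegrableOn, integrable_pi_iff]

theorem intervalIntegral.integral_apply {f : ℝ → ι → ℝ} (hf : IntervalIntegrable f μ a b)
    (i : ι) : (∫ θ in a..b, f θ ∂μ) i = ∫ θ in a..b, f θ i ∂μ :=
  ((ContinuousLinearMap.proj (R := ℝ) (φ := fun _ : ι => ℝ) i).intervalIntegral_comp_comm
    hf).symm

theorem IntervalIntegrable.const_dotProduct {f : ℝ → ι → ℝ} (hf : IntervalIntegrable f μ a b)
    (v : ι → ℝ) : IntervalIntegrable (fun θ => v ⬝ᵥ f θ) μ a b :=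
  let L := (dotProductBilin ℝ ℝ v).toContinuousLinearMap
  ⟨L.integrable_comp hf.1, L.integrable_comp hf.2⟩

theorem intervalIntegral.integral_const_dotProduct {f : ℝ → ι → ℝ}
    (hf : IntervalIntegrable f μ a b) (v : ι → ℝ) :
    ∫ θ in a..b, v ⬝ᵥ f θ ∂μ = v ⬝ᵥ ∫ θ in a..b, f θ ∂μ :=
  (dotProductBilin ℝ ℝ v).toContinuousLinearMap.intervalIntegral_comp_comm hf

theorem intervalIntegral.integral_mulVec {κ : Type*} [Fintype κ] {f : ℝ → Matrix κ ι ℝ}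
    (hf : ∀ i j, IntervalIntegrable (fun θ => f θ i j) μ a b) {K : Matrix κ ι ℝ}
    (hK : ∀ i j, K i j = ∫ θ in a..b, f θ i j ∂μ) (v : ι → ℝ) :
    ∫ θ in a..b, f θ *ᵥ v ∂μ = K *ᵥ v := by
  have hrow i : IntervalIntegrable (fun θ => f θ i) μ a b := intervalIntegrable_pi_iff.2 (hf i)
  have hK_row i : K i = ∫ θ in a..b, f θ i ∂μ :=
    funext fun j => by rw [hK, integral_apply (hrow i)]
  have hmulVec θ i : (f θ *ᵥ v) i = v ⬝ᵥ f θ i := dotProduct_comm _ _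
  funext i
  rw [integral_apply (intervalIntegrable_pi_iff.2 fun i => ?_)]
  · simp only [integral_const_dotProduct (hrow i), hK_row, mulVec, dotProduct_comm]
  · simpa only [hmulVec] using (hrow i).const_dotProduct v

end IntervalIntegral

section J2

variable {N M : ℕ} {τ μ : ℝ} {Γ : ℝ → Matrix (Fin N) (Fin M) ℝ} {mhat : Fin N → ℝ}

theorem J2_eq_integral (hτ : 0 ≤ τ) (hΓ : ContinuousOn Γ (Icc 0 τ)) {c : ℝ → Fin M → ℝ}
    (hc : ContinuousOn c (Icc 0 τ)) :
    J2 τ μ Γ mhat c = ∫ θ in (0:ℝ)..τ, (sqNorm (Γ θ *ᵥ c θ - mhat) + μ * sqNorm (c θ)) := by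
  have hfit : ContinuousOn (fun θ => sqNorm (Γ θ *ᵥ c θ - mhat)) (Icc 0 τ) := by fun_prop
  have hreg : ContinuousOn (fun θ => sqNorm (c θ)) (Icc 0 τ) := by fun_prop
  rw [J2, integral_add (hfit.intervalIntegrable_of_Icc hτ)
    ((hreg.intervalIntegrable_of_Icc hτ).const_mul μ), intervalIntegral.integral_const_mul]

theorem J2_le_of_normal_eq (hτ : 0 ≤ τ) (hμ : 0 ≤ μ) (hΓ : ContinuousOn Γ (Icc 0 τ))
    {lam : Fin M → ℝ} {cstar c : ℝ → Fin M → ℝ} (hcstar : ContinuousOn cstar (Icc 0 τ))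
    (hnormal : ∀ θ ∈ Icc 0 τ, ((Γ θ)ᵀ * Γ θ + μ • 1) *ᵥ cstar θ = (Γ θ)ᵀ *ᵥ mhat - lam)
    (hc : ContinuousOn c (Icc 0 τ)) (hsame : ∫ θ in (0:ℝ)..τ, c θ = ∫ θ in (0:ℝ)..τ, cstar θ) :
    J2 τ μ Γ mhat cstar ≤ J2 τ μ Γ mhat c := by
  have hdiff : IntervalIntegrable (fun θ => c θ - cstar θ) volume 0 τ :=
    (hc.sub hcstar).intervalIntegrable_of_Icc hτ
  have hpair : ∫ θ in (0:ℝ)..τ, lam ⬝ᵥ (c θ - cstar θ) = 0 := by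
    rw [integral_const_dotProduct hdiff, integral_sub (hc.intervalIntegrable_of_Icc hτ)
      (hcstar.intervalIntegrable_of_Icc hτ), hsame, sub_self, dotProduct_zero]
  have hintegrand {u : ℝ → Fin M → ℝ} (hu : ContinuousOn u (Icc 0 τ)) : IntervalIntegrable
      (fun θ => sqNorm (Γ θ *ᵥ u θ - mhat) + μ * sqNorm (u θ)) volume 0 τ :=
    ContinuousOn.intervalIntegrable_of_Icc hτ (by fun_prop)
  rw [J2_eq_integral hτ hΓ hc, J2_eq_integral hτ hΓ hcstar]
  calc ∫ θ in (0:ℝ)..τ, (sqNorm (Γ θ *ᵥ cstar θ - mhat) + μ * sqNorm (cstar θ))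
      = ∫ θ in (0:ℝ)..τ, (sqNorm (Γ θ *ᵥ cstar θ - mhat) + μ * sqNorm (cstar θ)
          - 2 * (lam ⬝ᵥ (c θ - cstar θ))) := by
        rw [integral_sub (hintegrand hcstar) (hdiff.const_dotProduct lam |>.const_mul 2),
          intervalIntegral.integral_const_mul, hpair, mul_zero, sub_zero]
    _ ≤ ∫ θ in (0:ℝ)..τ, (sqNorm (Γ θ *ᵥ c θ - mhat) + μ * sqNorm (c θ)) :=
        integral_mono_on hτ ((hintegrand hcstar).sub (hdiff.const_dotProduct lam |>.const_mul 2))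
          (hintegrand hc) fun θ hθ =>
            sqNorm_mulVec_sub_add_ge_of_normal_eq (Γ θ) hμ mhat (hnormal θ hθ) (c θ)

end J2

theorem J2_global_minimizer
    (N M : ℕ) (τ μ : ℝ) (hτ : 0 < τ) (hμ : 0 < μ)
    (ψ : Fin M → ℝ) (mhat : Fin N → ℝ)
    (Γ : ℝ → Matrix (Fin N) (Fin M) ℝ)
    (hΓ : ContinuousOn Γ (Set.Icc 0 τ))
    (Pmat : ℝ → Matrix (Fin M) (Fin M) ℝ)
    (hPmat : ∀ θ, Pmat θ = (Γ θ)ᵀ * Γ θ + μ • (1 : Matrix (Fin M) (Fin M) ℝ))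
    (A : Matrix (Fin M) (Fin M) ℝ)
    (hA : ∀ i j, A i j = ∫ θ in (0:ℝ)..τ, (Pmat θ)⁻¹ i j)
    (hAinv : IsUnit A.det)
    (lam : Fin M → ℝ)
    (B : Matrix (Fin M) (Fin N) ℝ)
    (hB : ∀ i j, B i j = ∫ θ in (0:ℝ)..τ, ((Pmat θ)⁻¹ * (Γ θ)ᵀ) i j)
    (hlam : lam = A⁻¹.mulVec (B.mulVec mhat - ψ))
    (cstar : ℝ → Fin M → ℝ)
    (hcstar : ∀ θ, cstar θ = (Pmat θ)⁻¹.mulVec ((Γ θ)ᵀ.mulVec mhat - lam)) :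
    (∫ θ in (0:ℝ)..τ, cstar θ) = ψ ∧
    ∀ c : ℝ → Fin M → ℝ, ContinuousOn c (Set.Icc 0 τ) →
      (∫ θ in (0:ℝ)..τ, c θ) = ψ →
      J2 τ μ Γ mhat cstar ≤ J2 τ μ Γ mhat c := by
  have hPD θ : (Pmat θ).PosDef := hPmat θ ▸ posDef_transpose_mul_self_add_smul_one (Γ θ) hμ
  have hPinv : ContinuousOn (fun θ => (Pmat θ)⁻¹) (Icc 0 τ) := by
    refine ContinuousOn.matrix_inv ?_ fun θ _ => (hPD θ).det_pos.ne'
    rw [funext hPmat]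
    fun_prop
  have hPinvGT : ContinuousOn (fun θ => (Pmat θ)⁻¹ * (Γ θ)ᵀ) (Icc 0 τ) := by fun_prop
  have hentry {k l : ℕ} {F : ℝ → Matrix (Fin k) (Fin l) ℝ} (hF : ContinuousOn F (Icc 0 τ)) i j :
      IntervalIntegrable (fun θ => F θ i j) volume 0 τ :=
    ((continuous_apply_apply i j).comp_continuousOn hF).intervalIntegrable_of_Icc hτ.le
  have hcstar_cont : ContinuousOn cstar (Icc 0 τ) := by
    rw [funext hcstar]
    fun_prop
  have hfeas : ∫ θ in (0:ℝ)..τ, cstar θ = ψ := by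
    have hsplit θ : cstar θ = ((Pmat θ)⁻¹ * (Γ θ)ᵀ) *ᵥ mhat - (Pmat θ)⁻¹ *ᵥ lam := by
      rw [hcstar, mulVec_sub, mulVec_mulVec]
    simp_rw [hsplit]
    rw [integral_sub (ContinuousOn.intervalIntegrable_of_Icc hτ.le (by fun_prop))
        (ContinuousOn.intervalIntegrable_of_Icc hτ.le (by fun_prop)),
      integral_mulVec (hentry hPinvGT) hB, integral_mulVec (hentry hPinv) hA, hlam,
      mulVec_mulVec, mul_nonsing_inv A hAinv, one_mulVec, sub_sub_cancel]
  refine ⟨hfeas, fun c hc hcψ => J2_le_of_normal_eq (lam := lam) hτ.le hμ.le hΓ hcstar_cont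
    (fun θ _ => ?_) hc (hcψ.trans hfeas.symm)⟩
  rw [← hPmat, hcstar, mulVec_mulVec, mul_nonsing_inv _ (hPD θ).det_pos.ne'.isUnit, one_mulVec]
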